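/- arXiv:1012.1539 — 7 statements merged into one kernel-verified Lean document; each statement's English description precedes it below -/
import Mathlib

section
/- Let Δ = (E[f(x,z)·x])² / (E_s · E[f(x,z)²]) and assume E[f(x,z)²] > 0 and 0 < Δ < 1. Then the supremum, over all a ∈ ℝ and θ < 0, of J(a,θ) = θ·E[(f(x,z) − a·x)²] − θ·E[f(x,z)²]/(1 − 2θa²E_s) + (1/2)·log(1 − 2θa²E_s) equals −(1/2)·log(1 − Δ), i.e. equals (1/2)·log(1 + Δ/(1 − Δ)). (This is the generalized mutual information of the distorted channel w = f(x,z) with Gaussian codebook ensemble and nearest-neighbor decoding, Proposition 1.) -/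
/-!
Expanding the square, `J(a, θ)` depends on `f` only through `P = E[f²]`, `R = E[f x]` and
`E_s = E[x²]`, with `R² = Δ E_s P`. Put `u = 1 - 2θa²E_s ≥ 1`. Completing a square gives
`θ E[(f - a x)²] - θ P / u ≤ (1 - (1 - Δ) u) / 2`, and `log ((1 - Δ) u) ≤ (1 - Δ) u - 1` then bounds
`J` by `-½ log (1 - Δ)`. Both inequalities are equalities at `a = R / E_s`, `θ = -1 / (2P(1 - Δ))`,
where `u = 1 / (1 - Δ)`.
-/

open MeasureTheory ProbabilityTheory Real
open scoped NNReal

lemma integral_sq_gaussianReal (m : ℝ) (v : ℝ≥0) :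
    ∫ x, x ^ 2 ∂gaussianReal m v = v + m ^ 2 := by
  have h := variance_eq_sub (memLp_id_gaussianReal (μ := m) (v := v) 2)
  simp only [variance_id_gaussianReal, Pi.pow_apply, id, integral_id_gaussianReal] at h
  linarith

lemma integral_fst_sq_prod_gaussianReal (m : ℝ) (v : ℝ≥0) (ν : Measure ℝ)
    [IsProbabilityMeasure ν] :
    ∫ p, p.1 ^ 2 ∂(gaussianReal m v).prod ν = v + m ^ 2 := by
  rw [integral_fun_fst (fun x : ℝ => x ^ 2), integral_sq_gaussianReal, probReal_univ, one_smul]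

lemma integrable_fst_sq_prod_gaussianReal (m : ℝ) (v : ℝ≥0) (ν : Measure ℝ) [IsFiniteMeasure ν] :
    Integrable (fun p : ℝ × ℝ => p.1 ^ 2) ((gaussianReal m v).prod ν) :=
  ((memLp_id_gaussianReal 2).integrable_sq).comp_fst ν

lemma integral_sub_mul_sq {α : Type*} [MeasurableSpace α] {μ : Measure α} {f g : α → ℝ}
    (hf : Integrable (fun x => f x ^ 2) μ) (hfg : Integrable (fun x => f x * g x) μ)
    (hg : Integrable (fun x => g x ^ 2) μ) (a : ℝ) :
    ∫ x, (f x - a * g x) ^ 2 ∂μ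
      = ∫ x, f x ^ 2 ∂μ - 2 * a * ∫ x, f x * g x ∂μ + a ^ 2 * ∫ x, g x ^ 2 ∂μ := by
  have hexp : (fun x => (f x - a * g x) ^ 2)
      = fun x => (f x ^ 2 - 2 * a * (f x * g x)) + a ^ 2 * g x ^ 2 := by
    funext x; ring
  have hfg' : Integrable (fun x => 2 * a * (f x * g x)) μ := hfg.const_mul _
  have hdiff : Integrable (fun x => f x ^ 2 - 2 * a * (f x * g x)) μ := hf.sub hfg'
  rw [hexp, integral_add hdiff (hg.const_mul _), integral_sub hf hfg',
    integral_const_mul, integral_const_mul]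

section Objective

variable {P R E Δ : ℝ}

lemma one_le_one_sub_two_mul_sq_mul {a θ : ℝ} (hθ : θ ≤ 0) (hE : 0 ≤ E) :
    1 ≤ 1 - 2 * θ * a ^ 2 * E := by
  nlinarith [mul_nonneg (neg_nonneg.mpr hθ) (mul_nonneg (sq_nonneg a) hE)]

lemma gmi_objective_sub_log_le (hE : 0 < E) (hP : 0 < P) (hR : R ^ 2 = Δ * E * P)
    {a θ : ℝ} (hθ : θ ≤ 0) :
    θ * (P - 2 * a * R + a ^ 2 * E) - θ * P / (1 - 2 * θ * a ^ 2 * E)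
      ≤ (1 - (1 - Δ) * (1 - 2 * θ * a ^ 2 * E)) / 2 := by
  set u := 1 - 2 * θ * a ^ 2 * E with hu
  have hu0 : 0 < u := one_pos.trans_le (one_le_one_sub_two_mul_sq_mul hθ hE.le)
  -- after clearing the denominator `2 u`, the gap is `(R u + 2 θ a E P)² / (E P)`
  have hgap : E * P * (u - (1 - Δ) * u ^ 2 - (2 * θ * (P - 2 * a * R + a ^ 2 * E) * u - 2 * θ * P))
      = (R * u + 2 * θ * a * E * P) ^ 2 := by
    rw [hu]; linear_combination -(1 - 2 * θ * a ^ 2 * E) ^ 2 * hR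
  have hcleared : 2 * θ * (P - 2 * a * R + a ^ 2 * E) * u - 2 * θ * P ≤ u - (1 - Δ) * u ^ 2 :=
    le_of_sub_nonneg (nonneg_of_mul_nonneg_right (hgap ▸ sq_nonneg _) (mul_pos hE hP))
  rw [sub_div' hu0.ne', div_le_div_iff₀ hu0 two_pos]
  linarith

lemma gmi_objective_le (hE : 0 < E) (hP : 0 < P) (hR : R ^ 2 = Δ * E * P) (hΔ : Δ < 1)
    {a θ : ℝ} (hθ : θ ≤ 0) :
    θ * (P - 2 * a * R + a ^ 2 * E) - θ * P / (1 - 2 * θ * a ^ 2 * E)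
      + 1 / 2 * log (1 - 2 * θ * a ^ 2 * E) ≤ -(1 / 2) * log (1 - Δ) := by
  have hu0 : 0 < 1 - 2 * θ * a ^ 2 * E :=
    one_pos.trans_le (one_le_one_sub_two_mul_sq_mul hθ hE.le)
  have hlog := log_le_sub_one_of_pos (mul_pos (sub_pos.mpr hΔ) hu0)
  rw [log_mul (sub_pos.mpr hΔ).ne' hu0.ne'] at hlog
  linarith [gmi_objective_sub_log_le hE hP hR (a := a) hθ]

lemma gmi_objective_optimum (hE : 0 < E) (hP : 0 < P) (hR : R ^ 2 = Δ * E * P) (hΔ : Δ < 1)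
    {a θ : ℝ} (ha : a = R / E) (hθ : θ = -1 / (2 * P * (1 - Δ))) :
    θ * (P - 2 * a * R + a ^ 2 * E) - θ * P / (1 - 2 * θ * a ^ 2 * E)
      + 1 / 2 * log (1 - 2 * θ * a ^ 2 * E) = -(1 / 2) * log (1 - Δ) := by
  have h1Δ : 1 - Δ ≠ 0 := (sub_pos.mpr hΔ).ne'
  have hu : 1 - 2 * θ * a ^ 2 * E = (1 - Δ)⁻¹ := by
    rw [ha, hθ]
    field_simp
    linear_combination hR
  have hM : P - 2 * a * R + a ^ 2 * E = P * (1 - Δ) := by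
    rw [ha]
    field_simp
    linear_combination -hR
  rw [hu, hM, log_inv, hθ]
  field_simp
  ring

lemma isLUB_gmi_objective (hE : 0 < E) (hP : 0 < P) (hR : R ^ 2 = Δ * E * P) (hΔ : Δ < 1) :
    IsLUB {y : ℝ | ∃ a θ : ℝ, θ < 0 ∧
        y = θ * (P - 2 * a * R + a ^ 2 * E) - θ * P / (1 - 2 * θ * a ^ 2 * E)
          + 1 / 2 * log (1 - 2 * θ * a ^ 2 * E)}
      (-(1 / 2) * log (1 - Δ)) := by
  refine ⟨?_, fun b hb => hb ⟨R / E, -1 / (2 * P * (1 - Δ)), ?_,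
    (gmi_objective_optimum hE hP hR hΔ rfl rfl).symm⟩⟩
  · rintro y ⟨a, θ, hθ, rfl⟩
    exact gmi_objective_le hE hP hR hΔ hθ.le
  · exact div_neg_of_neg_of_pos neg_one_lt_zero (mul_pos (mul_pos two_pos hP) (sub_pos.mpr hΔ))

end Objective

theorem stmt_0_general (Es σ2 : NNReal) (hEs : 0 < Es)
    (μ : Measure (ℝ × ℝ)) (hμ : μ = (gaussianReal 0 Es).prod (gaussianReal 0 σ2))
    (f : ℝ × ℝ → ℝ)
    (hf2 : Integrable (fun p => (f p) ^ 2) μ)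
    (hxf : Integrable (fun p => f p * p.1) μ)
    (hP : 0 < ∫ p, (f p) ^ 2 ∂μ)
    (Δ : ℝ)
    (hΔdef : Δ = (∫ p, f p * p.1 ∂μ) ^ 2 / ((Es : ℝ) * ∫ p, (f p) ^ 2 ∂μ))
    (hΔ1 : Δ < 1) :
    IsLUB {y : ℝ | ∃ a θ : ℝ, θ < 0 ∧
        y = θ * ∫ p, (f p - a * p.1) ^ 2 ∂μ
          - θ * (∫ p, (f p) ^ 2 ∂μ) / (1 - 2 * θ * a ^ 2 * (Es : ℝ))
          + (1 / 2) * Real.log (1 - 2 * θ * a ^ 2 * (Es : ℝ))}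
      (-(1 / 2) * Real.log (1 - Δ)) := by
  have hx2 : Integrable (fun p : ℝ × ℝ => p.1 ^ 2) μ :=
    hμ ▸ integrable_fst_sq_prod_gaussianReal 0 Es (gaussianReal 0 σ2)
  have hmoment : ∫ p, p.1 ^ 2 ∂μ = Es := by
    rw [hμ, integral_fst_sq_prod_gaussianReal, zero_pow two_ne_zero, add_zero]
  have hexpand : ∀ a : ℝ, ∫ p, (f p - a * p.1) ^ 2 ∂μ
      = (∫ p, f p ^ 2 ∂μ) - 2 * a * (∫ p, f p * p.1 ∂μ) + a ^ 2 * Es := fun a => by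
    rw [integral_sub_mul_sq hf2 hxf hx2, hmoment]
  simp_rw [hexpand]
  refine isLUB_gmi_objective (NNReal.coe_pos.mpr hEs) hP ?_ hΔ1
  rw [hΔdef]
  field_simp

theorem stmt_0 (Es σ2 : NNReal) (hEs : 0 < Es) (hσ2 : 0 < σ2)
    (μ : Measure (ℝ × ℝ)) (hμ : μ = (gaussianReal 0 Es).prod (gaussianReal 0 σ2))
    (f : ℝ × ℝ → ℝ) (hf : Measurable f)
    (hf2 : Integrable (fun p => (f p) ^ 2) μ)
    (hxf : Integrable (fun p => f p * p.1) μ)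
    (hP : 0 < ∫ p, (f p) ^ 2 ∂μ)
    (Δ : ℝ)
    (hΔdef : Δ = (∫ p, f p * p.1 ∂μ) ^ 2 / ((Es : ℝ) * ∫ p, (f p) ^ 2 ∂μ))
    (hΔ0 : 0 < Δ) (hΔ1 : Δ < 1) :
    IsLUB {y : ℝ | ∃ a θ : ℝ, θ < 0 ∧
        y = θ * ∫ p, (f p - a * p.1) ^ 2 ∂μ
          - θ * (∫ p, (f p) ^ 2 ∂μ) / (1 - 2 * θ * a ^ 2 * (Es : ℝ))
          + (1 / 2) * Real.log (1 - 2 * θ * a ^ 2 * (Es : ℝ))}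
      (-(1 / 2) * Real.log (1 - Δ)) :=
  stmt_0_general Es σ2 hEs μ hμ f hf2 hxf hP Δ hΔdef hΔ1
end

section
/- E[x·sgn(x+z)] = E_s·√(2/(π·(E_s + σ²))), i.e. ∫ x·sgn(x+z) dμ(x,z) = E_s·√(2/(π(E_s+σ²))). -/
open MeasureTheory ProbabilityTheory Real

/-! Integrate out `x` first. For the centred Gaussian density `φ_v` one has
`x φ_v(x) = -v φ_v'(x)`, so splitting the line at `x = -z` gives
`∫ x sgn(x + z) φ_v(x) dx = 2 v φ_v(z)`. Averaging over `z ~ N(0, σ²)` leaves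
`2 E_s ∫ φ_{E_s} φ_{σ²} = 2 E_s φ_{E_s + σ²}(0)`, a Gaussian integral, and
`2 φ_s(0) = √(2 / (π s))`. -/

open Set
open scoped NNReal

lemma Real.measurable_sign : Measurable Real.sign :=
  Measurable.ite (measurableSet_lt measurable_id measurable_const) measurable_const <|
    Measurable.ite (measurableSet_lt measurable_const measurable_id) measurable_const
      measurable_const

lemma Real.abs_sign_le_one (r : ℝ) : |Real.sign r| ≤ 1 := by
  rcases Real.sign_apply_eq r with h | h | h <;> simp [h]

namespace ProbabilityTheory

variable {μ : ℝ} {v : ℝ≥0}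

lemma integrable_gaussianPDFReal_smul_iff {E : Type*} [NormedAddCommGroup E] [NormedSpace ℝ E]
    {f : ℝ → E} (hv : v ≠ 0) :
    Integrable (fun x ↦ gaussianPDFReal μ v x • f x) ↔ Integrable f (gaussianReal μ v) := by
  rw [gaussianReal_of_var_ne_zero μ hv, integrable_withDensity_iff_integrable_smul'
    (measurable_gaussianPDF μ v) (ae_of_all _ fun _ ↦ gaussianPDF_lt_top)]
  simp only [toReal_gaussianPDF]

lemma hasDerivAt_gaussianPDFReal (μ : ℝ) (v : ℝ≥0) (x : ℝ) :
    HasDerivAt (gaussianPDFReal μ v) (-((x - μ) / v) * gaussianPDFReal μ v x) x := by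
  have h : HasDerivAt (fun x ↦ -(x - μ) ^ 2 / (2 * v)) (-((x - μ) / v)) x := by
    refine ((((hasDerivAt_id x).sub_const μ).pow 2).neg.div_const (2 * (v : ℝ))).congr_deriv ?_
    simp only [id]; ring
  refine (h.exp.const_mul (√(2 * π * v))⁻¹).congr_deriv ?_
  rw [gaussianPDFReal]; ring

lemma integrable_sub_mul_gaussianPDFReal (μ : ℝ) (v : ℝ≥0) :
    Integrable (fun x ↦ (x - μ) * gaussianPDFReal μ v x) := by
  rcases eq_or_ne v 0 with rfl | hv
  · simp
  simpa [mul_comm] using (integrable_gaussianPDFReal_smul_iff hv).2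
    (((memLp_id_gaussianReal (μ := μ) (v := v) 1).integrable le_rfl).sub (integrable_const μ))

lemma hasDerivAt_neg_mul_gaussianPDFReal (hv : v ≠ 0) (x : ℝ) :
    HasDerivAt (fun x ↦ -(v * gaussianPDFReal μ v x)) ((x - μ) * gaussianPDFReal μ v x) x := by
  refine ((hasDerivAt_gaussianPDFReal μ v x).const_mul (v : ℝ)).neg.congr_deriv ?_
  have : (v : ℝ) ≠ 0 := mod_cast hv
  field_simp

lemma integral_Ioi_sub_mul_gaussianPDFReal (hv : v ≠ 0) (a : ℝ) :
    ∫ x in Ioi a, (x - μ) * gaussianPDFReal μ v x = v * gaussianPDFReal μ v a := by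
  have hderiv := fun x (_ : x ∈ Ici a) ↦ hasDerivAt_neg_mul_gaussianPDFReal (μ := μ) hv x
  have hint := (integrable_sub_mul_gaussianPDFReal μ v).integrableOn (s := Ioi a)
  have hlim := tendsto_zero_of_hasDerivAt_of_integrableOn_Ioi
    (fun x hx ↦ hderiv x (mem_Ici.2 (le_of_lt hx))) hint
    ((integrable_gaussianPDFReal μ v).const_mul v).neg.integrableOn
  rw [integral_Ioi_of_hasDerivAt_of_tendsto' hderiv hint hlim]
  ring

lemma integral_Iic_sub_mul_gaussianPDFReal (hv : v ≠ 0) (a : ℝ) :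
    ∫ x in Iic a, (x - μ) * gaussianPDFReal μ v x = -(v * gaussianPDFReal μ v a) := by
  have hderiv := fun x (_ : x ∈ Iic a) ↦ hasDerivAt_neg_mul_gaussianPDFReal (μ := μ) hv x
  have hint := (integrable_sub_mul_gaussianPDFReal μ v).integrableOn (s := Iic a)
  have hlim := tendsto_zero_of_hasDerivAt_of_integrableOn_Iic hderiv
    hint ((integrable_gaussianPDFReal μ v).const_mul v).neg.integrableOn
  rw [integral_Iic_of_hasDerivAt_of_tendsto' hderiv hint hlim]
  ring

lemma integral_mul_sign_add_gaussianReal (v : ℝ≥0) (z : ℝ) :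
    ∫ x, x * sign (x + z) ∂gaussianReal 0 v = 2 * v * gaussianPDFReal 0 v z := by
  rcases eq_or_ne v 0 with rfl | hv
  · simp [gaussianReal_zero_var]
  have hint : Integrable (fun x ↦ gaussianPDFReal 0 v x • (x * sign (x + z))) :=
    (integrable_gaussianPDFReal_smul_iff hv).2 <|
      ((memLp_id_gaussianReal 1).integrable le_rfl).mul_bdd
        (measurable_sign.comp (measurable_add_const z)).aestronglyMeasurable
        (ae_of_all _ fun x ↦ abs_sign_le_one (x + z))
  have hsymm : gaussianPDFReal 0 v (-z) = gaussianPDFReal 0 v z := by simp [gaussianPDFReal]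
  have hleft : ∫ x in Iic (-z), gaussianPDFReal 0 v x • (x * sign (x + z))
      = v * gaussianPDFReal 0 v z := by
    rw [integral_Iic_eq_integral_Iio, setIntegral_congr_fun measurableSet_Iio
      (g := fun x ↦ -((x - 0) * gaussianPDFReal 0 v x)), integral_neg,
      ← integral_Iic_eq_integral_Iio, integral_Iic_sub_mul_gaussianPDFReal hv, neg_neg, hsymm]
    intro x hx
    dsimp only
    rw [sign_of_neg (by linarith [hx.out])]
    simp only [smul_eq_mul]; ring
  have hright : ∫ x in Ioi (-z), gaussianPDFReal 0 v x • (x * sign (x + z))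
      = v * gaussianPDFReal 0 v z := by
    rw [setIntegral_congr_fun measurableSet_Ioi
      (g := fun x ↦ (x - 0) * gaussianPDFReal 0 v x), integral_Ioi_sub_mul_gaussianPDFReal hv,
      hsymm]
    intro x hx
    dsimp only
    rw [sign_of_pos (by linarith [hx.out])]
    simp only [smul_eq_mul]; ring
  rw [integral_gaussianReal_eq_integral_smul hv, ← intervalIntegral.integral_Iic_add_Ioi
    hint.integrableOn hint.integrableOn, hleft, hright]
  ring

lemma gaussianPDFReal_zero_eq (v : ℝ≥0) (x : ℝ) :
    gaussianPDFReal 0 v x = (√(2 * π * v))⁻¹ * rexp (-(2 * (v : ℝ))⁻¹ * x ^ 2) := by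
  rw [gaussianPDFReal]
  congr 2
  ring

lemma gaussianPDFReal_zero_zero (v : ℝ≥0) : gaussianPDFReal 0 v 0 = (√(2 * π * v))⁻¹ := by
  simp [gaussianPDFReal]

lemma integral_gaussianPDFReal_gaussianReal (hv : v ≠ 0) (w : ℝ≥0) :
    ∫ x, gaussianPDFReal 0 v x ∂gaussianReal 0 w = gaussianPDFReal 0 (v + w) 0 := by
  rcases eq_or_ne w 0 with rfl | hw
  · simp [gaussianReal_zero_var]
  have hv' : (0 : ℝ) < v := by positivity
  have hw' : (0 : ℝ) < w := by positivity
  have hprod : ∀ x, gaussianPDFReal 0 w x • gaussianPDFReal 0 v x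
      = ((√(2 * π * w))⁻¹ * (√(2 * π * v))⁻¹) *
          rexp (-((2 * (w : ℝ))⁻¹ + (2 * (v : ℝ))⁻¹) * x ^ 2) := by
    intro x
    rw [smul_eq_mul, gaussianPDFReal_zero_eq, gaussianPDFReal_zero_eq, neg_add, add_mul, exp_add]
    ring
  simp_rw [integral_gaussianReal_eq_integral_smul hw, hprod, integral_const_mul, integral_gaussian,
    gaussianPDFReal_zero_zero, ← sqrt_inv]
  rw [← sqrt_mul (by positivity), ← sqrt_mul (by positivity)]
  push_cast
  congr 1
  field_simp

lemma two_mul_gaussianPDFReal_zero_zero (v : ℝ≥0) :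
    2 * gaussianPDFReal 0 v 0 = √(2 / (π * v)) := by
  have h : 2 / (π * v) = 2 ^ 2 * (2 * π * v)⁻¹ := by ring
  rw [h, sqrt_mul (by positivity), sqrt_sq zero_le_two, sqrt_inv, gaussianPDFReal_zero_zero]

end ProbabilityTheory

theorem stmt_4_general (Es σ2 : NNReal)
    (μ : Measure (ℝ × ℝ)) (hμ : μ = (gaussianReal 0 Es).prod (gaussianReal 0 σ2)) :
    ∫ p : ℝ × ℝ, p.1 * Real.sign (p.1 + p.2) ∂μ
      = (Es : ℝ) * Real.sqrt (2 / (Real.pi * ((Es : ℝ) + (σ2 : ℝ)))) := by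
  subst hμ
  have hint : Integrable (fun p : ℝ × ℝ ↦ p.1 * sign (p.1 + p.2))
      ((gaussianReal 0 Es).prod (gaussianReal 0 σ2)) :=
    (((memLp_id_gaussianReal 1).integrable le_rfl).comp_fst _).mul_bdd
      (measurable_sign.comp (measurable_fst.add measurable_snd)).aestronglyMeasurable
      (ae_of_all _ fun p ↦ abs_sign_le_one _)
  rw [integral_prod_symm _ hint]
  simp_rw [integral_mul_sign_add_gaussianReal, integral_const_mul]
  rcases eq_or_ne Es 0 with rfl | hEs
  · simp
  rw [integral_gaussianPDFReal_gaussianReal hEs, mul_comm 2, mul_assoc,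
    two_mul_gaussianPDFReal_zero_zero]
  push_cast
  ring

theorem stmt_4 (Es σ2 : NNReal) (hEs : 0 < Es) (hσ2 : 0 < σ2)
    (μ : Measure (ℝ × ℝ)) (hμ : μ = (gaussianReal 0 Es).prod (gaussianReal 0 σ2)) :
    ∫ p : ℝ × ℝ, p.1 * Real.sign (p.1 + p.2) ∂μ
      = (Es : ℝ) * Real.sqrt (2 / (Real.pi * ((Es : ℝ) + (σ2 : ℝ)))) :=
  stmt_4_general Es σ2 μ hμ
end

section
/- Let d ≥ 1, let Ω be a symmetric positive definite real d×d matrix, let b ∈ ℝ^d, let E_s > 0, and assume 0 < bᵀΩ⁻¹b < E_s. Then the supremum, over all β ∈ ℝ^d and θ < 0, of J(β,θ) = θ·(βᵀΩβ − 2·bᵀβ + E_s) − (θ/(1 − 2θE_s))·βᵀΩβ + (1/2)·log(1 − 2θE_s) equals −(1/2)·log(1 − bᵀΩ⁻¹b/E_s), i.e. equals (1/2)·log(1 + Δ/(1 − Δ)) with Δ = bᵀΩ⁻¹b/E_s. (This is the GMI formula for super-Nyquist output sampling, Proposition 2, where Ω is the correlation matrix of the distorted output samples and b is their correlation vector with the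 input symbol.) -/
/-!
Write `c = 1 - 2θEₛ > 1` and `Δ = bᵀΩ⁻¹b / Eₛ`. For fixed `θ` the objective is a concave quadratic
in `β` plus `(1 - c + log c) / 2`; completing the square against `x = Ω⁻¹b` bounds the quadratic
part by `c Δ / 2`, so the objective is at most `(1 - c(1 - Δ) + log c) / 2`, which by
`log t ≤ t - 1` is at most `-log(1 - Δ) / 2`. Both bounds are attained at `c = 1 / (1 - Δ)`,
`β = x / Δ`.
-/

open Real Matrix

namespace Matrix

variable {n : Type*} [Fintype n]

lemma IsSymm.dotProduct_mulVec_comm {α : Type*} [CommSemiring α] {Ω : Matrix n n α}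
    (hΩ : Ω.IsSymm) (u v : n → α) : u ⬝ᵥ (Ω *ᵥ v) = v ⬝ᵥ (Ω *ᵥ u) := by
  rw [dotProduct_mulVec, ← mulVec_transpose, hΩ.eq, dotProduct_comm]

-- Expand `(t • β - x)ᵀ Ω (t • β - x) ≥ 0`.
lemma PosSemidef.two_mul_dotProduct_sub_le {Ω : Matrix n n ℝ} (hΩ : Ω.PosSemidef)
    {b x : n → ℝ} (hx : Ω *ᵥ x = b) (β : n → ℝ) (t : ℝ) :
    2 * t * (b ⬝ᵥ β) - t ^ 2 * (β ⬝ᵥ (Ω *ᵥ β)) ≤ b ⬝ᵥ x := by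
  have h := hΩ.dotProduct_mulVec_nonneg (t • β - x)
  simp only [star_trivial, mulVec_sub, mulVec_smul, sub_dotProduct, dotProduct_sub,
    smul_dotProduct, dotProduct_smul, smul_eq_mul, hx] at h
  rw [(isHermitian_iff_isSymm.mp hΩ.isHermitian).dotProduct_mulVec_comm x β, hx,
    dotProduct_comm x b, dotProduct_comm β b] at h
  nlinarith

lemma mulVec_nonsing_inv_mulVec {R : Type*} [CommRing R] [DecidableEq n] {A : Matrix n n R}
    (hA : IsUnit A.det) (b : n → R) : A *ᵥ (A⁻¹ *ᵥ b) = b := by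
  rw [mulVec_mulVec, mul_nonsing_inv A hA, one_mulVec]

end Matrix

/-- The GMI objective `J(β, θ)` as a function of `Q = βᵀΩβ` and `P = bᵀβ`. -/
noncomputable def gmiObjective (Es Q P θ : ℝ) : ℝ :=
  θ * (Q - 2 * P + Es) - (θ / (1 - 2 * θ * Es)) * Q + (1 / 2) * Real.log (1 - 2 * θ * Es)

lemma gmiObjective_eq {Es θ c : ℝ} (hEs : Es ≠ 0) (hc : c ≠ 0) (hθ : θ = (1 - c) / (2 * Es))
    (Q P : ℝ) :
    gmiObjective Es Q P θ =
      c / (2 * Es) * (2 * ((c - 1) / c) * P - ((c - 1) / c) ^ 2 * Q)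
        + (1 - c + Real.log c) / 2 := by
  have hθc : 1 - 2 * θ * Es = c := by rw [hθ]; field_simp; ring
  unfold gmiObjective
  rw [hθc, hθ]
  field_simp
  ring

lemma gmiObjective_le {Es B Q P θ : ℝ} (hEs : 0 < Es) (hθ : θ < 0) (hBE : B < Es)
    (hQP : ∀ t : ℝ, 2 * t * P - t ^ 2 * Q ≤ B) :
    gmiObjective Es Q P θ ≤ -(1 / 2) * Real.log (1 - B / Es) := by
  set c := 1 - 2 * θ * Es with hc_def
  have hc : 1 < c := by nlinarith
  have hα : 0 < 1 - B / Es := by rw [sub_pos, div_lt_one hEs]; exact hBE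
  have hquad : c / (2 * Es) * (2 * ((c - 1) / c) * P - ((c - 1) / c) ^ 2 * Q)
      ≤ c / (2 * Es) * B :=
    mul_le_mul_of_nonneg_left (hQP _) (by positivity)
  have hlog : Real.log c + Real.log (1 - B / Es) ≤ c * (1 - B / Es) - 1 := by
    rw [← Real.log_mul (by positivity) hα.ne']
    exact Real.log_le_sub_one_of_pos (by positivity)
  have hcB : c * (1 - B / Es) = c - 2 * (c / (2 * Es) * B) := by field_simp
  rw [gmiObjective_eq (c := c) hEs.ne' (by positivity) (by rw [hc_def]; field_simp; ring)]
  linarith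

lemma gmiObjective_optimum {Es B : ℝ} (hB : 0 < B) (hBE : B < Es) :
    gmiObjective Es ((Es / B) ^ 2 * B) (Es / B * B) (-B / (2 * Es * (Es - B)))
      = -(1 / 2) * Real.log (1 - B / Es) := by
  have hEs : 0 < Es := hB.trans hBE
  have hEB : 0 < Es - B := sub_pos.mpr hBE
  have hc : 1 - 2 * (-B / (2 * Es * (Es - B))) * Es = (1 - B / Es)⁻¹ := by
    field_simp
    ring
  unfold gmiObjective
  rw [hc, Real.log_inv]
  field_simp
  ring

theorem stmt_13_general (d : ℕ) (Ω : Matrix (Fin d) (Fin d) ℝ) (hΩ : Ω.PosDef)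
    (b : Fin d → ℝ) (Es : ℝ) (hEs : 0 < Es)
    (hB0 : 0 < b ⬝ᵥ (Ω⁻¹ *ᵥ b)) (hBE : b ⬝ᵥ (Ω⁻¹ *ᵥ b) < Es) :
    IsLUB {y : ℝ | ∃ (β : Fin d → ℝ) (θ : ℝ), θ < 0 ∧
        y = θ * (β ⬝ᵥ (Ω *ᵥ β) - 2 * (b ⬝ᵥ β) + Es)
          - (θ / (1 - 2 * θ * Es)) * (β ⬝ᵥ (Ω *ᵥ β))
          + (1 / 2) * Real.log (1 - 2 * θ * Es)}
      (-(1 / 2) * Real.log (1 - b ⬝ᵥ (Ω⁻¹ *ᵥ b) / Es)) := by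
  set x := Ω⁻¹ *ᵥ b
  set B := b ⬝ᵥ x
  have hΩx : Ω *ᵥ x = b := mulVec_nonsing_inv_mulVec ((isUnit_iff_isUnit_det _).mp hΩ.isUnit) b
  refine ⟨?_, fun u hu => hu ?_⟩
  · rintro _ ⟨β, θ, hθ, rfl⟩
    exact gmiObjective_le hEs hθ hBE (hΩ.posSemidef.two_mul_dotProduct_sub_le hΩx β)
  · refine ⟨(Es / B) • x, -B / (2 * Es * (Es - B)),
      div_neg_of_neg_of_pos (by linarith) (by nlinarith), ?_⟩
    have hQ : (Es / B) • x ⬝ᵥ (Ω *ᵥ (Es / B) • x) = (Es / B) ^ 2 * B := by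
      rw [mulVec_smul, hΩx, smul_dotProduct, dotProduct_smul, dotProduct_comm x b]
      simp only [smul_eq_mul]
      ring
    have hP : b ⬝ᵥ (Es / B) • x = Es / B * B := by rw [dotProduct_smul, smul_eq_mul]
    rw [hQ, hP]
    exact (gmiObjective_optimum hB0 hBE).symm

theorem stmt_13 (d : ℕ) (hd : 1 ≤ d) (Ω : Matrix (Fin d) (Fin d) ℝ) (hΩ : Ω.PosDef)
    (b : Fin d → ℝ) (Es : ℝ) (hEs : 0 < Es)
    (hB0 : 0 < b ⬝ᵥ (Ω⁻¹ *ᵥ b)) (hBE : b ⬝ᵥ (Ω⁻¹ *ᵥ b) < Es) :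
    IsLUB {y : ℝ | ∃ (β : Fin d → ℝ) (θ : ℝ), θ < 0 ∧
        y = θ * (β ⬝ᵥ (Ω *ᵥ β) - 2 * (b ⬝ᵥ β) + Es)
          - (θ / (1 - 2 * θ * Es)) * (β ⬝ᵥ (Ω *ᵥ β))
          + (1 / 2) * Real.log (1 - 2 * θ * Es)}
      (-(1 / 2) * Real.log (1 - b ⬝ᵥ (Ω⁻¹ *ᵥ b) / Es)) :=
  stmt_13_general d Ω hΩ b Es hEs hB0 hBE
end

section
/- Let E_s > 0 and 0 < B < E_s. Then the supremum over θ < 0 of g(θ) = θ·E_s + (1/(2E_s) − θ)·B + (1/2)·log(1 − 2θE_s) equals −(1/2)·log(1 − B/E_s), and it is attained at the θ < 0 satisfying 1 − 2θE_s = E_s/(E_s − B). -/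
/-!
Substituting `u = 1 - 2θE_s > 0` and `c = 1 - B/E_s ∈ (0, 1)` turns the objective into
`(1 + log u - c u) / 2`. Since `log (c u) ≤ c u - 1`, this is at most `-(log c) / 2`,
with equality exactly at `u = 1/c = E_s/(E_s - B)`, which corresponds to a negative `θ`
because `c < 1`.
-/

open Real

lemma log_add_one_sub_mul_le_neg_log {c u : ℝ} (hc : 0 < c) (hu : 0 < u) :
    log u + 1 - c * u ≤ -log c := by
  have h := log_le_sub_one_of_pos (mul_pos hc hu)
  rw [log_mul hc.ne' hu.ne'] at h
  linarith

lemma log_inv_add_one_sub_mul_inv {c : ℝ} (hc : c ≠ 0) :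
    log c⁻¹ + 1 - c * c⁻¹ = -log c := by
  rw [log_inv, mul_inv_cancel₀ hc]
  ring

lemma objective_eq_half_log_add_one_sub_mul {Es : ℝ} (hEs : Es ≠ 0) (B θ : ℝ) :
    θ * Es + (1 / (2 * Es) - θ) * B + (1 / 2) * log (1 - 2 * θ * Es)
      = (log (1 - 2 * θ * Es) + 1 - (1 - B / Es) * (1 - 2 * θ * Es)) / 2 := by
  field_simp
  ring

theorem stmt_15 (Es B : ℝ) (hEs : 0 < Es) (hB0 : 0 < B) (hBE : B < Es) :
    IsGreatest {y : ℝ | ∃ θ : ℝ, θ < 0 ∧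
        y = θ * Es + (1 / (2 * Es) - θ) * B + (1 / 2) * Real.log (1 - 2 * θ * Es)}
      (-(1 / 2) * Real.log (1 - B / Es)) ∧
    ∃ θ : ℝ, θ < 0 ∧ 1 - 2 * θ * Es = Es / (Es - B) ∧
      θ * Es + (1 / (2 * Es) - θ) * B + (1 / 2) * Real.log (1 - 2 * θ * Es)
        = -(1 / 2) * Real.log (1 - B / Es) := by
  have hc : 0 < 1 - B / Es := by rw [sub_pos, div_lt_one hEs]; exact hBE
  have hc_inv : (1 - B / Es)⁻¹ = Es / (Es - B) := by field_simp
  set θ₀ := (1 - Es / (Es - B)) / (2 * Es)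
  have hθ₀ : θ₀ < 0 := by
    have : 1 < Es / (Es - B) := by rw [one_lt_div (by linarith)]; linarith
    exact div_neg_of_neg_of_pos (by linarith) (by positivity)
  have hu₀ : 1 - 2 * θ₀ * Es = Es / (Es - B) := by simp only [θ₀]; field_simp; ring
  have hval : θ₀ * Es + (1 / (2 * Es) - θ₀) * B + (1 / 2) * log (1 - 2 * θ₀ * Es)
      = -(1 / 2) * log (1 - B / Es) := by
    rw [objective_eq_half_log_add_one_sub_mul hEs.ne', hu₀, ← hc_inv,
      log_inv_add_one_sub_mul_inv hc.ne']
    ring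
  refine ⟨⟨⟨θ₀, hθ₀, hval.symm⟩, ?_⟩, θ₀, hθ₀, hu₀, hval⟩
  rintro y ⟨θ, hθ, rfl⟩
  have hu : 0 < 1 - 2 * θ * Es := by nlinarith
  rw [objective_eq_half_log_add_one_sub_mul hEs.ne']
  linarith [log_add_one_sub_mul_le_neg_log hc hu]
end

section
/- Let S : ℝ → ℝ be the normalized sinc function, S(x) = sin(πx)/(πx) for x ≠ 0 and S(0) = 1. Then for all a, b ∈ ℝ, the series Σ_{k ∈ ℤ} S(a − k)·S(b − k) converges and Σ_{k ∈ ℤ} S(a − k)·S(b − k) = S(a − b). (In the paper this gives Ξ(l, u) = Σ_{k ∈ ℤ} sinc(l/L − k)·sinc(u/L − k) = sinc((l − u)/L) for the sinc pulse-shaping function.) -/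
/-!
On `(-1/2, 1/2]` the `n`-th Fourier coefficient of `x ↦ exp (2πicx)` is `sinc (π (c - n))`.
Parseval's identity for `exp (2πiax)` and `exp (2πibx)` therefore turns the series into
`∫_{-1/2}^{1/2} exp (2πi(b - a)x) dx`, which is `sinc (π (b - a))`.
-/

open Real MeasureTheory AddCircle Set ComplexConjugate

theorem hasSum_conj_fourierCoeff_mul_fourierCoeff {T : ℝ} [hT : Fact (0 < T)]
    (f g : Lp ℂ 2 (@haarAddCircle T hT)) :
    HasSum (fun i => conj (fourierCoeff f i) * fourierCoeff g i)
      (∫ t, conj (f t) * g t ∂haarAddCircle) := by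
  simp_rw [mul_comm (conj _)]
  refine (fourierBasis.hasSum_inner_mul_inner f g).congr_fun fun n => ?_
  simp only [← fourierBasis_repr, HilbertBasis.repr_apply_apply, inner_conj_symm,
    mul_comm (inner ℂ f _)]

theorem hasSum_conj_fourierCoeffOn_mul_fourierCoeffOn {a b : ℝ} {f g : ℝ → ℂ} (hab : a < b)
    (hf : MemLp f 2 (volume.restrict (Ioc a b))) (hg : MemLp g 2 (volume.restrict (Ioc a b))) :
    HasSum (fun i => conj (fourierCoeffOn hab f i) * fourierCoeffOn hab g i)
      ((b - a)⁻¹ • ∫ x in a..b, conj (f x) * g x) := by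
  have := Fact.mk (by linarith : 0 < b - a)
  rw [← add_sub_cancel a b] at hf hg
  have hf' := hf.memLp_liftIoc.haarAddCircle
  have hg' := hg.memLp_liftIoc.haarAddCircle
  convert hasSum_conj_fourierCoeff_mul_fourierCoeff hf'.toLp hg'.toLp
  · simp [fourierCoeff_congr_ae hf'.coeFn_toLp, fourierCoeff_liftIoc_eq]
  · simp [fourierCoeff_congr_ae hg'.coeFn_toLp, fourierCoeff_liftIoc_eq]
  · nth_rw 2 [← add_sub_cancel a b]
    rw [← AddCircle.integral_liftIoc_eq_intervalIntegral, ← AddCircle.integral_haarAddCircle]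
    apply integral_congr_ae
    filter_upwards [hf'.coeFn_toLp, hg'.coeFn_toLp] with x hfx hgx
    rw [hfx, hgx]
    rfl

theorem memLp_exp_two_pi_I_mul (c : ℝ) (p : ENNReal) (μ : Measure ℝ) [IsFiniteMeasure μ] :
    MemLp (fun x : ℝ => Complex.exp (2 * π * Complex.I * c * x)) p μ := by
  refine MemLp.of_bound (by fun_prop) 1 (ae_of_all _ fun x => ?_)
  rw [show (2 * π * Complex.I * c * x : ℂ) = (2 * π * c * x : ℝ) * Complex.I by push_cast; ring,
    Complex.norm_exp_ofReal_mul_I]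

theorem integral_exp_two_pi_I_mul_eq_sinc (d : ℝ) :
    ∫ x in (-1/2 : ℝ)..1/2, Complex.exp (2 * π * Complex.I * d * x) = sinc (π * d) := by
  rcases eq_or_ne d 0 with rfl | hd
  · norm_num
  have hπd : (π * d : ℂ) ≠ 0 := by exact_mod_cast mul_ne_zero pi_ne_zero hd
  have hc : 2 * π * Complex.I * d ≠ 0 := by
    simpa [mul_assoc, mul_left_comm _ Complex.I] using hπd
  have hexp : Complex.exp (2 * π * Complex.I * d * (1/2 : ℝ))
      - Complex.exp (2 * π * Complex.I * d * (-1/2 : ℝ)) = 2 * Complex.sin (π * d) * Complex.I := by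
    rw [show (2 * π * Complex.I * d * (1/2 : ℝ) : ℂ) = (π * d) * Complex.I by push_cast; ring,
      show (2 * π * Complex.I * d * (-1/2 : ℝ) : ℂ) = -(π * d) * Complex.I by push_cast; ring,
      Complex.exp_mul_I, Complex.exp_mul_I, Complex.cos_neg, Complex.sin_neg]
    ring
  rw [integral_exp_mul_complex hc, sinc_of_ne_zero (mul_ne_zero pi_ne_zero hd), hexp]
  push_cast
  field_simp

theorem fourierCoeffOn_exp_two_pi_I_mul (c : ℝ) (n : ℤ) :
    fourierCoeffOn (by norm_num : (-1/2 : ℝ) < 1/2)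
      (fun x => Complex.exp (2 * π * Complex.I * c * x)) n = sinc (π * (c - n)) := by
  rw [fourierCoeffOn_eq_integral, ← integral_exp_two_pi_I_mul_eq_sinc]
  simp only [fourier_coe_apply, smul_eq_mul, ← Complex.exp_add]
  norm_num
  congr 1 with x
  ring_nf

theorem hasSum_sinc_mul_sinc (a b : ℝ) :
    HasSum (fun k : ℤ => sinc (π * (a - k)) * sinc (π * (b - k))) (sinc (π * (a - b))) := by
  have H := hasSum_conj_fourierCoeffOn_mul_fourierCoeffOn (by norm_num : (-1/2 : ℝ) < 1/2)
    (memLp_exp_two_pi_I_mul a 2 _) (memLp_exp_two_pi_I_mul b 2 _)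
  have hprod (x : ℝ) : conj (Complex.exp (2 * π * Complex.I * a * x))
      * Complex.exp (2 * π * Complex.I * b * x) = Complex.exp (2 * π * Complex.I * ↑(b - a) * x) := by
    rw [← Complex.exp_conj, ← Complex.exp_add]
    simp only [map_mul, Complex.conj_I, Complex.conj_ofReal, map_ofNat]
    push_cast
    ring_nf
  simp only [fourierCoeffOn_exp_two_pi_I_mul, Complex.conj_ofReal, hprod,
    integral_exp_two_pi_I_mul_eq_sinc] at H
  rw [show π * (a - b) = -(π * (b - a)) by ring, sinc_neg, ← Complex.hasSum_ofReal]
  convert H using 1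
  · push_cast
    rfl
  · norm_num

theorem stmt_16 (S : ℝ → ℝ) (hS0 : S 0 = 1)
    (hS : ∀ x : ℝ, x ≠ 0 → S x = Real.sin (Real.pi * x) / (Real.pi * x)) :
    ∀ a b : ℝ,
      Summable (fun k : ℤ => S (a - (k : ℝ)) * S (b - (k : ℝ))) ∧
      ∑' k : ℤ, S (a - (k : ℝ)) * S (b - (k : ℝ)) = S (a - b) := by
  have hS_eq : S = fun x => sinc (π * x) := by
    funext x
    rcases eq_or_ne x 0 with rfl | hx
    · simp [hS0]
    · rw [hS x hx, sinc_of_ne_zero (mul_ne_zero pi_ne_zero hx)]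
  subst hS_eq
  intro a b
  exact ⟨(hasSum_sinc_mul_sinc a b).summable, (hasSum_sinc_mul_sinc a b).tsum_eq⟩
end

section
/- Let c ∈ ℂ, P > 0, E_s > 0, and set Δ_opt = |c|²/(E_s·P); assume 0 < Δ_opt < 1. Then the supremum, over all γ > 0 and φ ∈ ℝ, of log(1 + γ) − γ + (1 + γ)·(Re(e^{iφ}·c))²/(E_s·P) equals −log(1 − Δ_opt) = log(1 + Δ_opt/(1 − Δ_opt)). (This is the core optimization yielding the GMI formula for complex-valued Nyquist-sampled channels, where c = E[conj(f(x,z))·x] and P = E[|f(x,z)|²].) -/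
/-!
The phase only enters through `(Re (e^{iφ} c))² ≤ |c|²`, with equality at `φ = -arg c`, which
reduces the objective to `log (1 + γ) - γ + (1 + γ) Δ`. Applying `log x ≤ x - 1` to
`x = (1 + γ)(1 - Δ)` bounds this by `-log (1 - Δ)`, with equality at `x = 1`, i.e.
`γ = Δ / (1 - Δ)`.
-/

open Real Complex

theorem Real.log_one_add_sub_add_mul_le_neg_log_one_sub {γ Δ : ℝ} (hγ : -1 < γ) (hΔ : Δ < 1) :
    log (1 + γ) - γ + (1 + γ) * Δ ≤ -log (1 - Δ) := by
  have hγ' : 0 < 1 + γ := by linarith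
  have hΔ' : 0 < 1 - Δ := by linarith
  have := log_le_sub_one_of_pos (mul_pos hγ' hΔ')
  rw [log_mul hγ'.ne' hΔ'.ne'] at this
  linarith

theorem Real.log_one_add_sub_add_mul_eq_neg_log_one_sub {Δ : ℝ} (hΔ : Δ < 1) :
    log (1 + Δ / (1 - Δ)) - Δ / (1 - Δ) + (1 + Δ / (1 - Δ)) * Δ = -log (1 - Δ) := by
  have hΔ' : 1 - Δ ≠ 0 := by linarith
  have h : 1 + Δ / (1 - Δ) = (1 - Δ)⁻¹ := by field_simp; ring
  rw [h, log_inv]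
  field_simp
  ring

theorem Complex.re_exp_ofReal_mul_I_mul_sq_le (φ : ℝ) (c : ℂ) :
    (exp (φ * I) * c).re ^ 2 ≤ ‖c‖ ^ 2 := by
  calc (exp (φ * I) * c).re ^ 2 ≤ normSq (exp (φ * I) * c) := by rw [sq]; exact re_sq_le_normSq _
    _ = ‖c‖ ^ 2 := by rw [normSq_eq_norm_sq, norm_mul, norm_exp_ofReal_mul_I, one_mul]

theorem Complex.exp_neg_arg_mul_I_mul_self (c : ℂ) : exp (↑(-c.arg) * I) * c = ‖c‖ := by
  nth_rewrite 2 [← norm_mul_exp_arg_mul_I c]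
  rw [mul_left_comm, ← Complex.exp_add, ofReal_neg, neg_mul, neg_add_cancel, Complex.exp_zero,
    mul_one]

theorem stmt_18 (c : ℂ) (P Es : ℝ) (hP : 0 < P) (hEs : 0 < Es)
    (Δopt : ℝ) (hΔdef : Δopt = ‖c‖ ^ 2 / (Es * P))
    (hΔ0 : 0 < Δopt) (hΔ1 : Δopt < 1) :
    IsLUB {y : ℝ | ∃ γ φ : ℝ, 0 < γ ∧
        y = Real.log (1 + γ) - γ
          + (1 + γ) * ((Complex.exp (φ * Complex.I) * c).re) ^ 2 / (Es * P)}
      (-Real.log (1 - Δopt)) := by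
  have hEP : 0 < Es * P := mul_pos hEs hP
  refine ⟨?_, fun b hb => hb ⟨Δopt / (1 - Δopt), -c.arg, div_pos hΔ0 (sub_pos.2 hΔ1), ?_⟩⟩
  · rintro y ⟨γ, φ, hγ, rfl⟩
    calc _ ≤ Real.log (1 + γ) - γ + (1 + γ) * Δopt := by
          rw [hΔdef, mul_div_assoc]
          gcongr _ + (1 + γ) * (?_ / _)
          exact re_exp_ofReal_mul_I_mul_sq_le φ c
      _ ≤ _ := log_one_add_sub_add_mul_le_neg_log_one_sub (by linarith) hΔ1
  · rw [exp_neg_arg_mul_I_mul_self, ofReal_re, mul_div_assoc, ← hΔdef]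
    exact (log_one_add_sub_add_mul_eq_neg_log_one_sub hΔ1).symm
end

section
/- Let M ≥ 1 and let p⁺, p⁻ : {1, …, M} → (0, ∞) satisfy Σ_{i=1}^M (p_i⁺ + p_i⁻) = 1. Then Σ_{i=1}^M [ ((p_i⁺ − p_i⁻)/2)·log(p_i⁺/p_i⁻) + (p_i⁺ + p_i⁻)·log 2 − (p_i⁺ + p_i⁻)·log(√(p_i⁺/p_i⁻) + √(p_i⁻/p_i⁺)) ] = log 2 − Σ_{i=1}^M [ (p_i⁺ + p_i⁻)·log(p_i⁺ + p_i⁻) − p_i⁺·log p_i⁺ − p_i⁻·log p_i⁻ ]. (This identity shows that, for antipodal inputs and a symmetric output quantizer with transition probabilities p_i^{(±)} = Pr[w = ±r_i | x = √E_s], the GMI with optimized reconstruction points equals the channel input–output mutual information I(x; w).) -/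
open Real

/-! Per symbol, `√(a/b) + √(b/a) = (a + b)/√(ab)`, so the logarithm of the GMI summand splits into
`log a`, `log b` and `log (a + b)`; what remains is `(a + b) log 2` minus the entropy deficit, and
`∑ (p⁺ + p⁻) = 1` turns the `log 2` terms into a single `log 2`. -/

lemma sqrt_div_add_sqrt_div {a b : ℝ} (ha : 0 < a) (hb : 0 < b) :
    √(a / b) + √(b / a) = (a + b) / √(a * b) := by
  have hsa : 0 < √a := sqrt_pos.2 ha
  have hsb : 0 < √b := sqrt_pos.2 hb
  rw [sqrt_div ha.le, sqrt_div hb.le, sqrt_mul ha.le, div_add_div _ _ hsb.ne' hsa.ne',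
    mul_self_sqrt ha.le, mul_self_sqrt hb.le, mul_comm √b]

lemma log_sqrt_div_add_sqrt_div {a b : ℝ} (ha : 0 < a) (hb : 0 < b) :
    log (√(a / b) + √(b / a)) = log (a + b) - (log a + log b) / 2 := by
  have hab : 0 < a * b := mul_pos ha hb
  rw [sqrt_div_add_sqrt_div ha hb, log_div (by positivity) (sqrt_pos.2 hab).ne',
    log_sqrt hab.le, log_mul ha.ne' hb.ne']

lemma sub_div_two_mul_log_div_sub_mul_log_sqrt_div_add_sqrt_div {a b : ℝ} (ha : 0 < a)
    (hb : 0 < b) :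
    (a - b) / 2 * log (a / b) - (a + b) * log (√(a / b) + √(b / a))
      = a * log a + b * log b - (a + b) * log (a + b) := by
  rw [log_sqrt_div_add_sqrt_div ha hb, log_div ha.ne' hb.ne']
  ring

theorem stmt_19_general (M : ℕ) (pp pm : ℕ → ℝ)
    (hpp : ∀ i ∈ Finset.Icc 1 M, 0 < pp i)
    (hpm : ∀ i ∈ Finset.Icc 1 M, 0 < pm i)
    (hsum : ∑ i ∈ Finset.Icc 1 M, (pp i + pm i) = 1) :
    ∑ i ∈ Finset.Icc 1 M,
        ((pp i - pm i) / 2 * Real.log (pp i / pm i)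
          + (pp i + pm i) * Real.log 2
          - (pp i + pm i) * Real.log (Real.sqrt (pp i / pm i) + Real.sqrt (pm i / pp i)))
      = Real.log 2 - ∑ i ∈ Finset.Icc 1 M,
          ((pp i + pm i) * Real.log (pp i + pm i)
            - pp i * Real.log (pp i) - pm i * Real.log (pm i)) := by
  have hterm : ∀ i ∈ Finset.Icc 1 M,
      ((pp i - pm i) / 2 * log (pp i / pm i)
        + (pp i + pm i) * log 2
        - (pp i + pm i) * log (√(pp i / pm i) + √(pm i / pp i)))
      = (pp i + pm i) * log 2
        - ((pp i + pm i) * log (pp i + pm i) - pp i * log (pp i) - pm i * log (pm i)) :=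
    fun i hi => by
      linarith [sub_div_two_mul_log_div_sub_mul_log_sqrt_div_add_sqrt_div (hpp i hi) (hpm i hi)]
  rw [Finset.sum_congr rfl hterm, Finset.sum_sub_distrib, ← Finset.sum_mul, hsum, one_mul]

theorem stmt_19 (M : ℕ) (hM : 1 ≤ M) (pp pm : ℕ → ℝ)
    (hpp : ∀ i ∈ Finset.Icc 1 M, 0 < pp i)
    (hpm : ∀ i ∈ Finset.Icc 1 M, 0 < pm i)
    (hsum : ∑ i ∈ Finset.Icc 1 M, (pp i + pm i) = 1) :
    ∑ i ∈ Finset.Icc 1 M,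
        ((pp i - pm i) / 2 * Real.log (pp i / pm i)
          + (pp i + pm i) * Real.log 2
          - (pp i + pm i) * Real.log (Real.sqrt (pp i / pm i) + Real.sqrt (pm i / pp i)))
      = Real.log 2 - ∑ i ∈ Finset.Icc 1 M,
          ((pp i + pm i) * Real.log (pp i + pm i)
            - pp i * Real.log (pp i) - pm i * Real.log (pm i)) :=
  stmt_19_general M pp pm hpp hpm hsum
end
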